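/- arXiv:2005.01437 — 3 statements merged into one kernel-verified Lean document; each statement's English description precedes it below -/
import Mathlib

section
/- Let g : ℝ^m → ℝ ∪ {∞} be a proper convex lower semicontinuous function, let b ∈ ℝ^m, and let L : ℝ^n → ℝ^m be a linear map satisfying L Lᵀ = α·Id for some constant α > 0. Define f : ℝ^n → ℝ ∪ {∞} by f(x) = g(Lx + b). Then for every x ∈ ℝ^n, prox_f(x) = x + α⁻¹ Lᵀ (prox_{αg}(Lx + b) − Lx − b). -/
/-!
Because `L Lᵀ = α • id`, the candidate `q = x + α⁻¹ Lᵀ (p - L x - b)` satisfies `L q + b = p` and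
`‖q - x‖² = α⁻¹ ‖p - (L x + b)‖²`, while `‖L w‖² ≤ α ‖w‖²` for every `w`. Multiplying the prox
inequality of `f` at `q` by `α` therefore reduces it to the prox inequality of `α g` at `p`.
Prox points of a convex function with a finite value there are unique (midpoint argument with
the parallelogram law), which gives the equivalence.
-/

noncomputable section

open scoped RealInnerProductSpace

/-- `p` is a proximal point of the extended-real-valued function `h` at `x`,
i.e. `p` minimizes `u ↦ h u + (1/2)‖u − x‖²`. -/
def IsProxPt {E : Type*} [NormedAddCommGroup E] [InnerProductSpace ℝ E]
    (h : E → EReal) (x p : E) : Prop :=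
  ∀ u : E,
    h p + (((1 : ℝ) / 2 * ‖p - x‖ ^ 2 : ℝ) : EReal) ≤
      h u + (((1 : ℝ) / 2 * ‖u - x‖ ^ 2 : ℝ) : EReal)

/-- `g` is proper, convex and lower semicontinuous (values in `ℝ ∪ {∞}`). -/
def ProperConvexLSC {E : Type*} [NormedAddCommGroup E] [InnerProductSpace ℝ E]
    (g : E → EReal) : Prop :=
  (∃ x, g x ≠ ⊤) ∧ (∀ x, g x ≠ ⊥) ∧ LowerSemicontinuous g ∧
    ∀ x y : E, ∀ a b : ℝ, 0 ≤ a → 0 ≤ b → a + b = 1 →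
      g (a • x + b • y) ≤ (a : EReal) * g x + (b : EReal) * g y

def ERealConvex {E : Type*} [AddCommGroup E] [Module ℝ E] (h : E → EReal) : Prop :=
  ∀ x y : E, ∀ a b : ℝ, 0 ≤ a → 0 ≤ b → a + b = 1 →
    h (a • x + b • y) ≤ (a : EReal) * h x + (b : EReal) * h y

lemma ERealConvex.comp_affine {E F : Type*} [AddCommGroup E] [Module ℝ E]
    [AddCommGroup F] [Module ℝ F] {g : F → EReal} (hg : ERealConvex g)
    (L : E →ₗ[ℝ] F) (c : F) : ERealConvex fun u => g (L u + c) := by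
  intro x y a b ha hb hab
  have hmap : L (a • x + b • y) + c = a • (L x + c) + b • (L y + c) := by
    rw [map_add, map_smul, map_smul, smul_add, smul_add, add_add_add_comm,
      ← add_smul, hab, one_smul]
  show g _ ≤ _
  rw [hmap]
  exact hg _ _ a b ha hb hab

section ProxPt

variable {E : Type*} [NormedAddCommGroup E] [InnerProductSpace ℝ E]
  {h : E → EReal} {x p q : E}

lemma IsProxPt.ne_top (hp : IsProxPt h x p) {u : E} (hu : h u ≠ ⊤) : h p ≠ ⊤ := by
  intro htop
  have hlt : h u + (((1 : ℝ) / 2 * ‖u - x‖ ^ 2 : ℝ) : EReal) < ⊤ :=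
    EReal.add_lt_top hu (EReal.coe_ne_top _)
  have := hp u
  rw [htop, EReal.top_add_coe] at this
  exact hlt.not_ge this

lemma isProxPt_iff_of_eq_coe (hbot : ∀ u, h u ≠ ⊥) {c : ℝ} (hc : h p = c) :
    IsProxPt h x p ↔
      ∀ u (r : ℝ), h u = r → c + 1 / 2 * ‖p - x‖ ^ 2 ≤ r + 1 / 2 * ‖u - x‖ ^ 2 := by
  constructor
  · intro hp u r hr
    have := hp u
    rw [hc, hr] at this
    exact_mod_cast this
  · intro hreal u
    rw [hc]
    induction hu : h u using EReal.rec with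
    | bot => exact absurd hu (hbot u)
    | top => rw [EReal.top_add_coe]; exact le_top
    | coe r => exact_mod_cast hreal u r hu

theorem IsProxPt.eq_of_ne_top (hconv : ERealConvex h) (hbot : ∀ u, h u ≠ ⊥)
    (hp : IsProxPt h x p) (hfin : h p ≠ ⊤) (hq : IsProxPt h x q) : q = p := by
  lift h p to ℝ using ⟨hfin, hbot p⟩ with c hc
  lift h q to ℝ using ⟨hq.ne_top (hc ▸ EReal.coe_ne_top c), hbot q⟩ with d hd
  set m : E := (1 / 2 : ℝ) • p + (1 / 2 : ℝ) • q
  have hm_le : h m ≤ ((c / 2 + d / 2 : ℝ) : EReal) := by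
    refine (hconv p q _ _ (by norm_num) (by norm_num) (by norm_num)).trans_eq ?_
    rw [← hc, ← hd]
    norm_cast
    ring
  lift h m to ℝ using ⟨ne_top_of_le_ne_top (EReal.coe_ne_top _) hm_le, hbot m⟩
    with e he
  have hpm := (isProxPt_iff_of_eq_coe hbot hc.symm).1 hp m e he.symm
  have hqm := (isProxPt_iff_of_eq_coe hbot hd.symm).1 hq m e he.symm
  have he_le : e ≤ c / 2 + d / 2 := by exact_mod_cast hm_le
  -- the parallelogram law makes `u ↦ ‖u - x‖²` strictly convex at the midpoint
  have hpar := parallelogram_law_with_norm ℝ (p - x) (q - x)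
  have hmid : m - x = (1 / 2 : ℝ) • ((p - x) + (q - x)) := by
    simp only [m]; module
  rw [show p - x - (q - x) = p - q by abel] at hpar
  rw [hmid, norm_smul, mul_pow, Real.norm_eq_abs, abs_of_pos (by norm_num)] at hpm hqm
  have hsq : ‖p - q‖ ^ 2 ≤ 0 := by nlinarith
  rw [eq_comm, ← sub_eq_zero, ← norm_eq_zero]
  exact pow_eq_zero_iff two_ne_zero |>.1 (le_antisymm hsq (sq_nonneg _))

end ProxPt

section CoIsometry

variable {E F : Type*} [NormedAddCommGroup E] [InnerProductSpace ℝ E] [CompleteSpace E]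
  [NormedAddCommGroup F] [InnerProductSpace ℝ F] [CompleteSpace F]
  {L : E →L[ℝ] F} {α : ℝ}

open ContinuousLinearMap

lemma norm_adjoint_apply_sq (hL : L ∘L adjoint L = α • ContinuousLinearMap.id ℝ F) (u : F) :
    ‖adjoint L u‖ ^ 2 = α * ‖u‖ ^ 2 := by
  rw [← real_inner_self_eq_norm_sq, adjoint_inner_left, ← comp_apply, hL,
    smul_apply, id_apply, real_inner_smul_right, real_inner_self_eq_norm_sq]

lemma norm_apply_sq_le (hL : L ∘L adjoint L = α • ContinuousLinearMap.id ℝ F) (hα : 0 ≤ α)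
    (w : E) : ‖L w‖ ^ 2 ≤ α * ‖w‖ ^ 2 := by
  have hLnorm : ‖L‖ ^ 2 ≤ α := by
    calc ‖L‖ ^ 2 = ‖adjoint L‖ * ‖adjoint L‖ := by rw [LinearIsometryEquiv.norm_map, sq]
      _ = ‖L ∘L adjoint L‖ := by simpa using (norm_adjoint_comp_self (adjoint L)).symm
      _ ≤ α * ‖ContinuousLinearMap.id ℝ F‖ := by
          rw [hL, norm_smul, Real.norm_of_nonneg hα]
      _ ≤ α := mul_le_of_le_one_right hα norm_id_le
  calc ‖L w‖ ^ 2 ≤ (‖L‖ * ‖w‖) ^ 2 := by gcongr; exact le_opNorm L w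
    _ = ‖L‖ ^ 2 * ‖w‖ ^ 2 := mul_pow _ _ _
    _ ≤ α * ‖w‖ ^ 2 := by gcongr

lemma apply_add_inv_smul_adjoint (hL : L ∘L adjoint L = α • ContinuousLinearMap.id ℝ F)
    (hα : α ≠ 0) (x : E) (p c : F) : L (x + α⁻¹ • adjoint L (p - L x - c)) + c = p := by
  rw [map_add, map_smul, ← comp_apply, hL, smul_apply, id_apply, smul_smul,
    inv_mul_cancel₀ hα, one_smul]
  abel

theorem isProxPt_comp_affine {g : F → EReal} (hbot : ∀ z, g z ≠ ⊥) (hα : 0 < α)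
    (hL : L ∘L adjoint L = α • ContinuousLinearMap.id ℝ F) {x : E} {c p : F}
    (hp : IsProxPt (fun z => (α : EReal) * g z) (L x + c) p) (hfin : g p ≠ ⊤) :
    IsProxPt (fun u => g (L u + c)) x (x + α⁻¹ • adjoint L (p - L x - c)) := by
  lift g p to ℝ using ⟨hfin, hbot p⟩ with d hd
  have hnorm : ‖x + α⁻¹ • adjoint L (p - L x - c) - x‖ ^ 2 = α⁻¹ * ‖p - (L x + c)‖ ^ 2 := by
    rw [add_sub_cancel_left, norm_smul, mul_pow, norm_adjoint_apply_sq hL, Real.norm_eq_abs,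
      abs_of_pos (inv_pos.2 hα), sub_sub]
    field_simp
  rw [isProxPt_iff_of_eq_coe (fun u => hbot _) (by rw [apply_add_inv_smul_adjoint hL hα.ne', hd]),
    hnorm]
  intro u r hr
  have hpu : α * d + 1 / 2 * ‖p - (L x + c)‖ ^ 2 ≤
      α * r + 1 / 2 * ‖L u + c - (L x + c)‖ ^ 2 := by
    have := hp (L u + c)
    simp only [← hd, hr] at this
    exact_mod_cast this
  have hLu := norm_apply_sq_le hL hα.le (u - x)
  rw [map_sub, ← add_sub_add_right_eq_sub (L u) (L x) c] at hLu
  refine le_of_mul_le_mul_left ?_ hα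
  have hcancel : α * (d + 1 / 2 * (α⁻¹ * ‖p - (L x + c)‖ ^ 2)) =
      α * d + 1 / 2 * ‖p - (L x + c)‖ ^ 2 := by
    field_simp
  nlinarith

end CoIsometry

theorem statement0 (n m : ℕ)
    (g : EuclideanSpace ℝ (Fin m) → EReal) (hg : ProperConvexLSC g)
    (b : EuclideanSpace ℝ (Fin m))
    (L : EuclideanSpace ℝ (Fin n) →L[ℝ] EuclideanSpace ℝ (Fin m))
    (α : ℝ) (hα : 0 < α)
    (hL : L.comp (ContinuousLinearMap.adjoint L) =
      α • ContinuousLinearMap.id ℝ (EuclideanSpace ℝ (Fin m)))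
    (f : EuclideanSpace ℝ (Fin n) → EReal)
    (hf : ∀ x, f x = g (L x + b)) :
    ∀ (x : EuclideanSpace ℝ (Fin n)) (p : EuclideanSpace ℝ (Fin m)),
      IsProxPt (fun z => (α : EReal) * g z) (L x + b) p →
        ∀ q : EuclideanSpace ℝ (Fin n),
          IsProxPt f x q ↔
            q = x + α⁻¹ • (ContinuousLinearMap.adjoint L) (p - L x - b) := by
  obtain ⟨⟨x₀, hx₀⟩, hbot, -, hconv⟩ := hg
  obtain rfl : f = fun u => g (L u + b) := funext hf
  intro x p hp q
  have hfin : g p ≠ ⊤ := by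
    lift g x₀ to ℝ using ⟨hx₀, hbot x₀⟩ with r hr
    have hαg : (α : EReal) * g p ≠ ⊤ := hp.ne_top (u := x₀) (by simp [← hr, ← EReal.coe_mul])
    exact fun htop => hαg (by rw [htop, EReal.coe_mul_top_of_pos hα])
  have hprox := isProxPt_comp_affine hbot hα hL hp hfin
  constructor
  · intro hq
    refine hprox.eq_of_ne_top (ERealConvex.comp_affine hconv L.toLinearMap b)
      (fun u => hbot _) ?_ hq
    simpa only [ContinuousLinearMap.coe_coe, apply_add_inv_smul_adjoint hL hα.ne'] using hfin
  · rintro rfl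
    exact hprox
end
end

section
/- Let g : ℝ^m → ℝ ∪ {∞} be a proper convex lower semicontinuous function and let A : ℝ^n → ℝ^m be a linear map satisfying Aᵀ A = α·Id for some constant α > 0. Define the operator approx_f : ℝ^n → ℝ^n by approx_f(x) = α⁻¹ Aᵀ prox_{αg}(Ax). Then there exists a convex lower semicontinuous function φ : ℝ^n → ℝ ∪ {∞} such that approx_f = prox_φ; in particular, approx_f is a proximal operator. -/
noncomputable section

/-- `g` is convex and lower semicontinuous, with values in `ℝ ∪ {∞}`. -/
def ConvexLSC {E : Type*} [NormedAddCommGroup E] [InnerProductSpace ℝ E]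
    (g : E → EReal) : Prop :=
  (∀ x, g x ≠ ⊥) ∧ LowerSemicontinuous g ∧
    ∀ x y : E, ∀ a b : ℝ, 0 ≤ a → 0 ≤ b → a + b = 1 →
      g (a • x + b • y) ≤ (a : EReal) * g x + (b : EReal) * g y

/-!
Put `L = α⁻¹ • Aᵀ`; then `A ∘ L` is the orthogonal projection onto the range of `A`, and for
`L p = q` Pythagoras gives `‖p - A x‖² = ‖p - A (L p)‖² + α ‖q - x‖²`. Hence, for
`φ q = inf { g p + ‖p - A (L p)‖² / (2α) : L p = q }`, the proximal objective
`φ q + ‖q - x‖² / 2` is the infimum of `g p + ‖p - A x‖² / (2α)` over the fibre `L p = q`.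
Minimising over `q` as well gives the proximal problem of `α g` at `A x`, whose solution
`P (A x)` lies in the fibre over `L (P (A x))`; the quadratic growth of the proximal objective
around `P (A x)`, together with `α ‖L p‖² ≤ ‖p‖²`, makes this the unique minimiser.
The function `φ` is convex as an infimal projection of a convex function along a linear map,
and lower semicontinuous since `g + ‖·‖² / (2α)` has bounded sublevel sets.
-/

open Set Bornology
open scoped InnerProduct

def EConvex {E : Type*} [AddCommGroup E] [Module ℝ E] (f : E → EReal) : Prop :=
  ∀ x y : E, ∀ a b : ℝ, 0 ≤ a → 0 ≤ b → a + b = 1 →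
    f (a • x + b • y) ≤ (a : EReal) * f x + (b : EReal) * f y

theorem EReal.sInf_image_add_coe {ι : Type*} (f : ι → EReal) (s : Set ι) (c : ℝ) :
    sInf (f '' s) + c = sInf ((fun i => f i + c) '' s) := by
  rw [← image_image (· + (c : EReal)) f s]
  refine Monotone.map_sInf_of_continuousAt ?_ (fun _ _ h => add_le_add h le_rfl)
    (EReal.top_add_coe c)
  exact (EReal.continuousAt_add (Or.inr (EReal.coe_ne_bot c)) (Or.inr (EReal.coe_ne_top c))).comp
    (continuousAt_id.prodMk continuousAt_const)

theorem LowerSemicontinuous.add_coe {X : Type*} [TopologicalSpace X] {f : X → EReal}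
    (hf : LowerSemicontinuous f) {k : X → ℝ} (hk : Continuous k) :
    LowerSemicontinuous fun x => f x + k x :=
  hf.add' (continuous_coe_real_ereal.comp hk).lowerSemicontinuous fun _ =>
    EReal.continuousAt_add (Or.inr (EReal.coe_ne_bot _)) (Or.inr (EReal.coe_ne_top _))

theorem LowerSemicontinuous.sInf_image_fiber {X Y : Type*} [PseudoMetricSpace X] [ProperSpace X]
    [TopologicalSpace Y] [T2Space Y] {ψ : X → EReal} (hψ : LowerSemicontinuous ψ)
    (hbdd : ∀ s : ℝ, IsBounded {x | ψ x ≤ s}) {L : X → Y} (hL : Continuous L) :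
    LowerSemicontinuous fun y => sInf (ψ '' {x | L x = y}) := by
  refine lowerSemicontinuous_iff_isClosed_preimage.2 fun r => ?_
  have hsublevel : (fun y => sInf (ψ '' {x | L x = y})) ⁻¹' Iic r =
      ⋂ s : ℝ, ⋂ (_ : r < s), L '' {x | ψ x ≤ s} := by
    ext y
    simp only [mem_preimage, mem_Iic, mem_iInter]
    constructor
    · intro hy s hs
      obtain ⟨_, ⟨x, hx, rfl⟩, hxs⟩ := sInf_lt_iff.1 (hy.trans_lt hs)
      exact ⟨x, hxs.le, hx⟩
    · intro h
      refine EReal.le_of_forall_lt_iff_le.1 fun s hs => ?_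
      obtain ⟨x, hxs, rfl⟩ := h s hs
      exact (sInf_le (mem_image_of_mem (a := {z | L z = L x}) ψ rfl)).trans hxs
  rw [hsublevel]
  exact isClosed_iInter fun s => isClosed_iInter fun _ =>
    ((Metric.isCompact_of_isClosed_isBounded (hψ.isClosed_preimage s) (hbdd s)).image hL).isClosed

section Convexity

variable {E F : Type*} [AddCommGroup E] [Module ℝ E] [AddCommGroup F] [Module ℝ F]

theorem EConvex.add_coe {f : F → EReal} (hf : EConvex f) {c : F → ℝ} (hc : ConvexOn ℝ univ c) :
    EConvex fun x => f x + c x := by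
  intro x y a b ha hb hab
  calc f (a • x + b • y) + c (a • x + b • y)
      ≤ (a * f x + b * f y) + ((a * c x + b * c y : ℝ) : EReal) :=
        add_le_add (hf x y a b ha hb hab)
          (EReal.coe_le_coe_iff.2 (hc.2 (mem_univ x) (mem_univ y) ha hb hab))
    _ = a * (f x + c x) + b * (f y + c y) := by
        rw [EReal.left_distrib_of_nonneg_of_ne_top (EReal.coe_nonneg.2 ha) (EReal.coe_ne_top a),
          EReal.left_distrib_of_nonneg_of_ne_top (EReal.coe_nonneg.2 hb) (EReal.coe_ne_top b),
          EReal.coe_add, EReal.coe_mul, EReal.coe_mul, add_add_add_comm]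

theorem EConvex.sInf_image_fiber {G : F → EReal} (hG : EConvex G) (L : F →ₗ[ℝ] E)
    (hbot : ∀ q, sInf (G '' {p | L p = q}) ≠ ⊥) :
    EConvex fun q => sInf (G '' {p | L p = q}) := by
  intro q₁ q₂ a b ha hb hab
  rcases ha.eq_or_lt with rfl | ha
  · obtain rfl : b = 1 := by linarith
    simp
  rcases hb.eq_or_lt with rfl | hb
  · obtain rfl : a = 1 := by linarith
    simp
  set φ := fun q => sInf (G '' {p | L p = q})
  have hmul_ne_bot : ∀ {c : ℝ}, 0 < c → ∀ q, (c : EReal) * φ q ≠ ⊥ := fun hc q =>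
    (EReal.mul_ne_bot _ _).2 ⟨Or.inl (EReal.coe_ne_bot _), Or.inr (hbot q),
      Or.inl (EReal.coe_ne_top _), Or.inl (EReal.coe_nonneg.2 hc.le)⟩
  by_cases h₁ : φ q₁ = ⊤
  · rw [h₁, EReal.coe_mul_top_of_pos ha, EReal.top_add_of_ne_bot (hmul_ne_bot hb q₂)]
    exact le_top
  by_cases h₂ : φ q₂ = ⊤
  · rw [h₂, EReal.coe_mul_top_of_pos hb, EReal.add_top_of_ne_bot (hmul_ne_bot ha q₁)]
    exact le_top
  lift φ q₁ to ℝ using ⟨h₁, hbot q₁⟩ with r₁ hr₁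
  lift φ q₂ to ℝ using ⟨h₂, hbot q₂⟩ with r₂ hr₂
  refine EReal.le_of_forall_lt_iff_le.1 fun z hz => ?_
  rw [← EReal.coe_mul, ← EReal.coe_mul, ← EReal.coe_add, EReal.coe_lt_coe_iff] at hz
  have hnear : ∀ q (r : ℝ), φ q = r → ∃ p, L p = q ∧ G p < (r + (z - (a * r₁ + b * r₂)) : ℝ) :=
    fun q r hr => by
      obtain ⟨_, ⟨p, hp, rfl⟩, hlt⟩ := sInf_lt_iff.1 (hr.trans_lt
        (EReal.coe_lt_coe_iff.2 (lt_add_of_pos_right r (sub_pos.2 hz))))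
      exact ⟨p, hp, hlt⟩
  obtain ⟨p₁, hp₁, hG₁⟩ := hnear q₁ r₁ hr₁.symm
  obtain ⟨p₂, hp₂, hG₂⟩ := hnear q₂ r₂ hr₂.symm
  calc φ (a • q₁ + b • q₂) ≤ G (a • p₁ + b • p₂) := sInf_le ⟨_, by simp [hp₁, hp₂], rfl⟩
    _ ≤ a * G p₁ + b * G p₂ := hG p₁ p₂ a b ha.le hb.le hab
    _ ≤ a * ((r₁ + (z - (a * r₁ + b * r₂)) : ℝ) : EReal)
          + b * ((r₂ + (z - (a * r₁ + b * r₂)) : ℝ) : EReal) :=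
        add_le_add (mul_le_mul_of_nonneg_left hG₁.le (EReal.coe_nonneg.2 ha.le))
          (mul_le_mul_of_nonneg_left hG₂.le (EReal.coe_nonneg.2 hb.le))
    _ = z := by
        rw [← EReal.coe_mul, ← EReal.coe_mul, ← EReal.coe_add, EReal.coe_eq_coe_iff]
        linear_combination (z - (a * r₁ + b * r₂)) * hab

end Convexity

section Prox

variable {E : Type*} [NormedAddCommGroup E] [InnerProductSpace ℝ E]

theorem isProxPt_iff_of_quadratic_growth {f : E → EReal} {x q₀ : E} {m c : ℝ} (hc : 0 < c)
    (hle : f q₀ + (((1 : ℝ) / 2 * ‖q₀ - x‖ ^ 2 : ℝ) : EReal) ≤ m)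
    (hge : ∀ q, ((m + c * ‖q - q₀‖ ^ 2 : ℝ) : EReal) ≤
      f q + (((1 : ℝ) / 2 * ‖q - x‖ ^ 2 : ℝ) : EReal))
    (q : E) : IsProxPt f x q ↔ q = q₀ := by
  constructor
  · intro hq
    have h := EReal.coe_le_coe_iff.1 ((hge q).trans ((hq q₀).trans hle))
    have hsq : ‖q - q₀‖ ^ 2 = 0 := le_antisymm (by nlinarith) (sq_nonneg _)
    simpa [sub_eq_zero] using hsq
  · rintro rfl u
    exact hle.trans
      ((EReal.coe_le_coe_iff.2 (le_add_of_nonneg_right (by positivity))).trans (hge u))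

theorem norm_midpoint_sub_sq (u v w : E) :
    ‖(1 / 2 : ℝ) • u + (1 / 2 : ℝ) • v - w‖ ^ 2
      = 1 / 2 * ‖u - w‖ ^ 2 + 1 / 2 * ‖v - w‖ ^ 2 - 1 / 4 * ‖u - v‖ ^ 2 := by
  have hmid : (1 / 2 : ℝ) • u + (1 / 2 : ℝ) • v - w = (1 / 2 : ℝ) • ((u - w) + (v - w)) := by
    module
  have hpar := parallelogram_law_with_norm ℝ (u - w) (v - w)
  rw [sub_sub_sub_cancel_right] at hpar
  rw [hmid, norm_smul, mul_pow]
  norm_num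
  nlinarith [hpar]

variable {g : E → EReal} {α : ℝ} {v p : E}

theorem IsProxPt.exists_apply_eq_coe (hbot : ∀ u, g u ≠ ⊥) (hα : 0 < α)
    (hp : IsProxPt (fun z => (α : EReal) * g z) v p) {u : E} (hu : g u ≠ ⊤) :
    ∃ r : ℝ, g p = r := by
  refine ⟨(g p).toReal, (EReal.coe_toReal (fun hpt => ?_) (hbot p)).symm⟩
  have h := hp u
  lift g u to ℝ using ⟨hu, hbot u⟩ with s
  rw [hpt, EReal.coe_mul_top_of_pos hα, EReal.top_add_coe, top_le_iff, ← EReal.coe_mul,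
    ← EReal.coe_add] at h
  exact EReal.coe_ne_top _ h

/-- The constant `1/4` rather than the optimal `1/2`: only convexity at the midpoint is used. -/
theorem IsProxPt.mul_add_sq_le (hbot : ∀ u, g u ≠ ⊥) (hconv : EConvex g) (hα : 0 < α)
    (hp : IsProxPt (fun z => (α : EReal) * g z) v p) {r : ℝ} (hr : g p = r) {u : E} {s : ℝ}
    (hs : g u = s) :
    α * r + 1 / 2 * ‖p - v‖ ^ 2 + 1 / 4 * ‖u - p‖ ^ 2 ≤ α * s + 1 / 2 * ‖u - v‖ ^ 2 := by
  have hmid := hconv u p (1 / 2) (1 / 2) (by norm_num) (by norm_num) (by norm_num)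
  rw [hs, hr, ← EReal.coe_mul, ← EReal.coe_mul, ← EReal.coe_add] at hmid
  lift g ((1 / 2 : ℝ) • u + (1 / 2 : ℝ) • p) to ℝ
    using ⟨(hmid.trans_lt (EReal.coe_lt_top _)).ne, hbot _⟩ with c hc
  have hprox := hp ((1 / 2 : ℝ) • u + (1 / 2 : ℝ) • p)
  dsimp only at hprox
  rw [hr, ← hc, ← EReal.coe_mul, ← EReal.coe_mul, ← EReal.coe_add, ← EReal.coe_add,
    EReal.coe_le_coe_iff] at hprox
  rw [EReal.coe_le_coe_iff] at hmid
  nlinarith [norm_midpoint_sub_sq u p v, mul_le_mul_of_nonneg_left hmid hα.le]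

theorem IsProxPt.isBounded_setOf_add_sq_le (hbot : ∀ u, g u ≠ ⊥) (hconv : EConvex g)
    (hα : 0 < α) (hp : IsProxPt (fun z => (α : EReal) * g z) 0 p) {r : ℝ} (hr : g p = r)
    (s : ℝ) : IsBounded {u | g u + ((‖u‖ ^ 2 / (2 * α) : ℝ) : EReal) ≤ s} := by
  refine (Metric.isBounded_closedBall (x := p) (r := √(4 * α * (s - r)))).subset
    fun u (hu : g u + _ ≤ _) => ?_
  have hut : g u ≠ ⊤ := fun h => by
    rw [h, EReal.top_add_coe, top_le_iff] at hu
    exact EReal.coe_ne_top s hu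
  lift g u to ℝ using ⟨hut, hbot u⟩ with t ht
  rw [← EReal.coe_add, EReal.coe_le_coe_iff] at hu
  have hgrowth := hp.mul_add_sq_le hbot hconv hα hr ht.symm
  simp only [sub_zero] at hgrowth
  have hu' : α * t + 1 / 2 * ‖u‖ ^ 2 ≤ α * s := by
    have := mul_le_mul_of_nonneg_left hu hα.le
    rw [mul_add, mul_div_assoc', mul_comm α (‖u‖ ^ 2), mul_div_mul_right _ _ hα.ne'] at this
    linarith
  rw [Metric.mem_closedBall, dist_eq_norm]
  exact Real.le_sqrt_of_sq_le (by nlinarith [sq_nonneg ‖p‖])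

end Prox

section ProxPullback

variable {E F : Type*} [NormedAddCommGroup E] [InnerProductSpace ℝ E] [CompleteSpace E]
  [NormedAddCommGroup F] [InnerProductSpace ℝ F] [CompleteSpace F] {A : E →L[ℝ] F} {α : ℝ}

theorem norm_apply_sq_of_adjoint_comp_self (hA : A† ∘L A = α • ContinuousLinearMap.id ℝ E)
    (w : E) : ‖A w‖ ^ 2 = α * ‖w‖ ^ 2 := by
  rw [← real_inner_self_eq_norm_sq, ← ContinuousLinearMap.adjoint_inner_left,
    ← ContinuousLinearMap.comp_apply, hA]
  simp [real_inner_smul_left]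

/-- Pythagoras for the orthogonal projection `A ∘ (α⁻¹ • A†)` onto the range of `A`. -/
theorem norm_sub_apply_sq_of_adjoint_comp_self (hα : α ≠ 0)
    (hA : A† ∘L A = α • ContinuousLinearMap.id ℝ E) (p : F) (x : E) :
    ‖p - A x‖ ^ 2 = ‖p - A (α⁻¹ • (A†) p)‖ ^ 2 + α * ‖α⁻¹ • (A†) p - x‖ ^ 2 := by
  have horth : inner ℝ (p - A (α⁻¹ • (A†) p)) (A (α⁻¹ • (A†) p - x)) = 0 := by
    rw [← ContinuousLinearMap.adjoint_inner_left, map_sub, ← ContinuousLinearMap.comp_apply, hA]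
    simp [smul_smul, hα]
  have hsplit : p - A x = (p - A (α⁻¹ • (A†) p)) + A (α⁻¹ • (A†) p - x) := by
    rw [map_sub]; abel
  rw [hsplit, norm_add_sq_real, horth, norm_apply_sq_of_adjoint_comp_self hA]
  ring

theorem mul_norm_sq_le_of_adjoint_comp_self (hα : α ≠ 0)
    (hA : A† ∘L A = α • ContinuousLinearMap.id ℝ E) (p : F) :
    α * ‖α⁻¹ • (A†) p‖ ^ 2 ≤ ‖p‖ ^ 2 := by
  have h := norm_sub_apply_sq_of_adjoint_comp_self hα hA p 0
  simp only [map_zero, sub_zero] at h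
  linarith [sq_nonneg ‖p - A (α⁻¹ • (A†) p)‖]

/-- `A (α⁻¹ • (A†) p)` is the orthogonal projection of `p` onto the range of `A`, so the real
summand is `dist (p, range A)² / (2α)`. -/
def proxPullback (g : F → EReal) (A : E →L[ℝ] F) (α : ℝ) (q : E) : EReal :=
  sInf ((fun p => g p + ((‖p - A (α⁻¹ • (A†) p)‖ ^ 2 / (2 * α) : ℝ) : EReal)) ''
    {p | α⁻¹ • (A†) p = q})

variable {g : F → EReal}

theorem proxPullback_eq_sInf_add (hα : 0 < α) (hA : A† ∘L A = α • ContinuousLinearMap.id ℝ E)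
    (q x : E) :
    proxPullback g A α q =
      sInf ((fun p => g p + ((‖p - A x‖ ^ 2 / (2 * α) : ℝ) : EReal)) '' {p | α⁻¹ • (A†) p = q}) +
        ((-(1 / 2 * ‖q - x‖ ^ 2) : ℝ) : EReal) := by
  rw [EReal.sInf_image_add_coe, proxPullback]
  refine congrArg sInf (image_congr fun p (hp : α⁻¹ • (A†) p = q) => ?_)
  rw [add_assoc, ← EReal.coe_add, norm_sub_apply_sq_of_adjoint_comp_self hα.ne' hA p x, hp]
  congr 2
  field_simp
  ring

theorem proxPullback_add_sq (hα : 0 < α) (hA : A† ∘L A = α • ContinuousLinearMap.id ℝ E)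
    (q x : E) :
    proxPullback g A α q + (((1 : ℝ) / 2 * ‖q - x‖ ^ 2 : ℝ) : EReal) =
      sInf ((fun p => g p + ((‖p - A x‖ ^ 2 / (2 * α) : ℝ) : EReal)) ''
        {p | α⁻¹ • (A†) p = q}) := by
  rw [proxPullback_eq_sInf_add hα hA q x, add_assoc, ← EReal.coe_add, neg_add_cancel,
    EReal.coe_zero, add_zero]

theorem proxPullback_add_sq_le (hα : 0 < α) (hA : A† ∘L A = α • ContinuousLinearMap.id ℝ E)
    (p : F) (x : E) :
    proxPullback g A α (α⁻¹ • (A†) p) + (((1 : ℝ) / 2 * ‖α⁻¹ • (A†) p - x‖ ^ 2 : ℝ) : EReal) ≤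
      g p + ((‖p - A x‖ ^ 2 / (2 * α) : ℝ) : EReal) := by
  rw [proxPullback_add_sq hα hA]
  exact sInf_le (mem_image_of_mem _ rfl)

theorem IsProxPt.le_proxPullback_add_sq (hbot : ∀ u, g u ≠ ⊥) (hconv : EConvex g) (hα : 0 < α)
    (hA : A† ∘L A = α • ContinuousLinearMap.id ℝ E) {x : E} {p₀ : F}
    (hp₀ : IsProxPt (fun z => (α : EReal) * g z) (A x) p₀) {r : ℝ} (hr : g p₀ = r) (q : E) :
    ((r + ‖p₀ - A x‖ ^ 2 / (2 * α) + 1 / 4 * ‖q - α⁻¹ • (A†) p₀‖ ^ 2 : ℝ) : EReal) ≤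
      proxPullback g A α q + (((1 : ℝ) / 2 * ‖q - x‖ ^ 2 : ℝ) : EReal) := by
  rw [proxPullback_add_sq hα hA]
  refine le_sInf (forall_mem_image.2 fun p (hp : α⁻¹ • (A†) p = q) => ?_)
  by_cases hpt : g p = ⊤
  · rw [hpt, EReal.top_add_coe]
    exact le_top
  lift g p to ℝ using ⟨hpt, hbot p⟩ with s hs
  rw [← EReal.coe_add, EReal.coe_le_coe_iff]
  have hgrowth := hp₀.mul_add_sq_le hbot hconv hα hr hs.symm
  have hfibre : α * ‖q - α⁻¹ • (A†) p₀‖ ^ 2 ≤ ‖p - p₀‖ ^ 2 := by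
    simpa [← hp, smul_sub] using mul_norm_sq_le_of_adjoint_comp_self hα.ne' hA (p - p₀)
  refine le_of_mul_le_mul_left ?_ hα
  have hlhs : α * (r + ‖p₀ - A x‖ ^ 2 / (2 * α) + 1 / 4 * ‖q - α⁻¹ • (A†) p₀‖ ^ 2) =
      α * r + 1 / 2 * ‖p₀ - A x‖ ^ 2 + 1 / 4 * (α * ‖q - α⁻¹ • (A†) p₀‖ ^ 2) := by
    field_simp
  have hrhs : α * (s + ‖p - A x‖ ^ 2 / (2 * α)) = α * s + 1 / 2 * ‖p - A x‖ ^ 2 := by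
    field_simp
  rw [hlhs, hrhs]
  linarith

theorem isProxPt_proxPullback_iff (hbot : ∀ u, g u ≠ ⊥) (hconv : EConvex g) (hα : 0 < α)
    (hA : A† ∘L A = α • ContinuousLinearMap.id ℝ E) {x : E} {p₀ : F}
    (hp₀ : IsProxPt (fun z => (α : EReal) * g z) (A x) p₀) {u : F} (hu : g u ≠ ⊤) (q : E) :
    IsProxPt (proxPullback g A α) x q ↔ q = α⁻¹ • (A†) p₀ := by
  obtain ⟨r, hr⟩ := hp₀.exists_apply_eq_coe hbot hα hu
  refine isProxPt_iff_of_quadratic_growth (m := r + ‖p₀ - A x‖ ^ 2 / (2 * α)) (c := 1 / 4)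
    (by norm_num) ?_ (hp₀.le_proxPullback_add_sq hbot hconv hα hA hr) q
  exact (proxPullback_add_sq_le hα hA p₀ x).trans_eq (by rw [hr, ← EReal.coe_add])

theorem convexOn_norm_sub_apply_sq (hα : 0 < α) :
    ConvexOn ℝ univ fun p : F => ‖p - A (α⁻¹ • (A†) p)‖ ^ 2 / (2 * α) := by
  have hsq : ConvexOn ℝ univ fun p : F => ‖p‖ ^ 2 :=
    (convexOn_norm convex_univ).pow (fun _ _ => norm_nonneg _) 2
  have h := (hsq.comp_linearMap (LinearMap.id - (A ∘L (α⁻¹ • A†)).toLinearMap)).smul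
    (inv_nonneg.2 (by positivity : (0 : ℝ) ≤ 2 * α))
  rw [preimage_univ] at h
  refine h.congr fun p _ => ?_
  simp [div_eq_inv_mul]

theorem lowerSemicontinuous_proxPullback [ProperSpace F] (hα : 0 < α)
    (hA : A† ∘L A = α • ContinuousLinearMap.id ℝ E) (hlsc : LowerSemicontinuous g)
    (hbdd : ∀ s : ℝ, IsBounded {p | g p + ((‖p‖ ^ 2 / (2 * α) : ℝ) : EReal) ≤ s}) :
    LowerSemicontinuous (proxPullback g A α) := by
  have hshift : proxPullback g A α = fun q =>
      sInf ((fun p => g p + ((‖p‖ ^ 2 / (2 * α) : ℝ) : EReal)) '' {p | α⁻¹ • (A†) p = q}) +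
        ((-(1 / 2 * ‖q‖ ^ 2) : ℝ) : EReal) := by
    funext q
    simpa using proxPullback_eq_sInf_add (g := g) hα hA q 0
  rw [hshift]
  exact ((hlsc.add_coe (by fun_prop)).sInf_image_fiber hbdd
    (L := fun p => α⁻¹ • (A†) p) (by fun_prop)).add_coe (by fun_prop)

theorem convexLSC_proxPullback [ProperSpace F] (hα : 0 < α)
    (hA : A† ∘L A = α • ContinuousLinearMap.id ℝ E) (hg : ProperConvexLSC g) {P : F → F}
    (hP : ∀ v, IsProxPt (fun z => (α : EReal) * g z) v (P v)) :
    ConvexLSC (proxPullback g A α) := by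
  obtain ⟨⟨u, hu⟩, hbot, hlsc, hconv⟩ := hg
  have hne_bot : ∀ q, proxPullback g A α q ≠ ⊥ := fun q hq => by
    obtain ⟨r, hr⟩ := (hP (A q)).exists_apply_eq_coe hbot hα hu
    have h := (hP (A q)).le_proxPullback_add_sq hbot hconv hα hA hr q
    rw [hq, EReal.bot_add] at h
    exact EReal.coe_ne_bot _ (le_bot_iff.1 h)
  obtain ⟨r, hr⟩ := (hP 0).exists_apply_eq_coe hbot hα hu
  refine ⟨hne_bot, lowerSemicontinuous_proxPullback hα hA hlsc
    ((hP 0).isBounded_setOf_add_sq_le hbot hconv hα hr), ?_⟩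
  exact (EConvex.add_coe hconv (convexOn_norm_sub_apply_sq hα)).sInf_image_fiber
    (α⁻¹ • A† : F →L[ℝ] E).toLinearMap hne_bot

end ProxPullback

theorem statement4 (n m : ℕ)
    (g : EuclideanSpace ℝ (Fin m) → EReal) (hg : ProperConvexLSC g)
    (A : EuclideanSpace ℝ (Fin n) →L[ℝ] EuclideanSpace ℝ (Fin m))
    (α : ℝ) (hα : 0 < α)
    (hA : (ContinuousLinearMap.adjoint A).comp A =
      α • ContinuousLinearMap.id ℝ (EuclideanSpace ℝ (Fin n)))
    (P : EuclideanSpace ℝ (Fin m) → EuclideanSpace ℝ (Fin m))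
    (hP : ∀ x, IsProxPt (fun z => (α : EReal) * g z) x (P x)) :
    ∃ φ : EuclideanSpace ℝ (Fin n) → EReal, ConvexLSC φ ∧
      ∀ (x q : EuclideanSpace ℝ (Fin n)),
        IsProxPt φ x q ↔ q = α⁻¹ • (ContinuousLinearMap.adjoint A) (P (A x)) := by
  refine ⟨proxPullback g A α, convexLSC_proxPullback hα hA hg hP, fun x q => ?_⟩
  obtain ⟨⟨u, hu⟩, hbot, -, hconv⟩ := hg
  exact isProxPt_proxPullback_iff hbot hconv hα hA (hP (A x)) hu q
end
end

section
/- Let g : ℝ^m → ℝ ∪ {∞} be a proper convex lower semicontinuous function, let b ∈ ℝ^m, let A : ℝ^n → ℝ^m be a linear map satisfying Aᵀ A = α·Id for some α > 0, let x ∈ ℝ^n, and suppose ž ∈ ℝ^m satisfies ž − b ∈ R(A) (the range of A). Then ž minimizes over z ∈ ℝ^m (with the constraint z − b ∈ R(A)) the function α g(z) + (1/2)‖z − (Ax + b)‖² if and only if ž minimizes over z ∈ ℝ^m (with the same constraint) the function g(z) + (1/2)‖α⁻¹ Aᵀ(z − b) − x‖²; in other words, the minimization defining prox_{αg + ι_{R(A)+b}}(Ax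 + b) is equivalent, on the affine set R(A) + b, to minimizing g(z) + (1/2)‖α⁻¹Aᵀ(z − b) − x‖². -/
noncomputable section

/-! On the affine set `z ∈ range A + b`, write `z = A u + b`. Since `Aᵀ A = α • id`, the map `A`
scales norms by `√α` and `α⁻¹ Aᵀ (z - b) = u`, so `‖z - (A x + b)‖² = ‖A (u - x)‖² =
α ‖α⁻¹ Aᵀ (z - b) - x‖²`. Hence the first objective is `α` times the second, and multiplication
by `α > 0` is an order isomorphism of `EReal` that distributes over adding a real number. -/

namespace EReal

lemma coe_mul_add_coe_mul {α : ℝ} (hα : 0 ≤ α) (a : EReal) (r : ℝ) :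
    (α : EReal) * a + ((α * r : ℝ) : EReal) = α * (a + r) := by
  rw [left_distrib_of_nonneg_of_ne_top (EReal.coe_nonneg.mpr hα) (coe_ne_top α), coe_mul]

lemma coe_mul_le_coe_mul_iff {α : ℝ} (hα : 0 < α) {a b : EReal} :
    (α : EReal) * a ≤ α * b ↔ a ≤ b := by
  refine ⟨fun h => ?_, fun h => mul_le_mul_of_nonneg_left h (EReal.coe_nonneg.mpr hα.le)⟩
  have hinv := mul_le_mul_of_nonneg_left h (EReal.coe_nonneg.mpr (inv_nonneg.mpr hα.le))
  rwa [← mul_assoc, ← mul_assoc, ← coe_mul, inv_mul_cancel₀ hα.ne', coe_one, one_mul,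
    one_mul] at hinv

end EReal

namespace ContinuousLinearMap

variable {E F : Type*} [NormedAddCommGroup E] [InnerProductSpace ℝ E] [CompleteSpace E]
  [NormedAddCommGroup F] [InnerProductSpace ℝ F] [CompleteSpace F]
  {A : E →L[ℝ] F} {α : ℝ}

lemma adjoint_apply_apply_of_adjoint_comp_self_eq_smul
    (hA : adjoint A ∘L A = α • ContinuousLinearMap.id ℝ E) (v : E) : adjoint A (A v) = α • v := by
  simpa using congr($hA v)

lemma norm_apply_sq_of_adjoint_comp_self_eq_smul
    (hA : adjoint A ∘L A = α • ContinuousLinearMap.id ℝ E) (v : E) : ‖A v‖ ^ 2 = α * ‖v‖ ^ 2 := by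
  rw [← real_inner_self_eq_norm_sq, ← real_inner_self_eq_norm_sq, ← adjoint_inner_left,
    adjoint_apply_apply_of_adjoint_comp_self_eq_smul hA, real_inner_smul_left]

lemma inv_smul_adjoint_apply_apply_of_adjoint_comp_self_eq_smul
    (hA : adjoint A ∘L A = α • ContinuousLinearMap.id ℝ E) (hα : α ≠ 0) (v : E) :
    α⁻¹ • adjoint A (A v) = v := by
  rw [adjoint_apply_apply_of_adjoint_comp_self_eq_smul hA, inv_smul_smul₀ hα]

lemma norm_sub_add_sq_eq_mul_norm_inv_smul_adjoint_sub_sq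
    (hA : adjoint A ∘L A = α • ContinuousLinearMap.id ℝ E) (hα : α ≠ 0)
    (b z : F) (hz : z - b ∈ Set.range A) (x : E) :
    ‖z - (A x + b)‖ ^ 2 = α * ‖α⁻¹ • adjoint A (z - b) - x‖ ^ 2 := by
  obtain ⟨u, hu⟩ := hz
  have hresidual : z - (A x + b) = A (u - x) := by
    rw [map_sub, hu]
    abel
  rw [hresidual, norm_apply_sq_of_adjoint_comp_self_eq_smul hA, ← hu,
    inv_smul_adjoint_apply_apply_of_adjoint_comp_self_eq_smul hA hα]

end ContinuousLinearMap

theorem statement11_general (n m : ℕ)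
    (g : EuclideanSpace ℝ (Fin m) → EReal)
    (b : EuclideanSpace ℝ (Fin m))
    (A : EuclideanSpace ℝ (Fin n) →L[ℝ] EuclideanSpace ℝ (Fin m))
    (α : ℝ) (hα : 0 < α)
    (hA : (ContinuousLinearMap.adjoint A).comp A =
      α • ContinuousLinearMap.id ℝ (EuclideanSpace ℝ (Fin n)))
    (x : EuclideanSpace ℝ (Fin n))
    (zc : EuclideanSpace ℝ (Fin m)) (hzc : zc - b ∈ Set.range A) :
    (∀ z : EuclideanSpace ℝ (Fin m), z - b ∈ Set.range A →
        (α : EReal) * g zc + (((1 : ℝ) / 2 * ‖zc - (A x + b)‖ ^ 2 : ℝ) : EReal) ≤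
          (α : EReal) * g z + (((1 : ℝ) / 2 * ‖z - (A x + b)‖ ^ 2 : ℝ) : EReal)) ↔
      (∀ z : EuclideanSpace ℝ (Fin m), z - b ∈ Set.range A →
        g zc + (((1 : ℝ) / 2 *
            ‖α⁻¹ • (ContinuousLinearMap.adjoint A) (zc - b) - x‖ ^ 2 : ℝ) : EReal) ≤
          g z + (((1 : ℝ) / 2 *
            ‖α⁻¹ • (ContinuousLinearMap.adjoint A) (z - b) - x‖ ^ 2 : ℝ) : EReal)) := by
  have hobjective : ∀ z, z - b ∈ Set.range A →
      (1 : ℝ) / 2 * ‖z - (A x + b)‖ ^ 2 =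
        α * ((1 : ℝ) / 2 * ‖α⁻¹ • ContinuousLinearMap.adjoint A (z - b) - x‖ ^ 2) :=
    fun z hz => by
      rw [ContinuousLinearMap.norm_sub_add_sq_eq_mul_norm_inv_smul_adjoint_sub_sq hA hα.ne' b z hz]
      ring
  refine forall₂_congr fun z hz => ?_
  rw [hobjective zc hzc, hobjective z hz, EReal.coe_mul_add_coe_mul hα.le,
    EReal.coe_mul_add_coe_mul hα.le, EReal.coe_mul_le_coe_mul_iff hα]

theorem statement11 (n m : ℕ)
    (g : EuclideanSpace ℝ (Fin m) → EReal) (hg : ProperConvexLSC g)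
    (b : EuclideanSpace ℝ (Fin m))
    (A : EuclideanSpace ℝ (Fin n) →L[ℝ] EuclideanSpace ℝ (Fin m))
    (α : ℝ) (hα : 0 < α)
    (hA : (ContinuousLinearMap.adjoint A).comp A =
      α • ContinuousLinearMap.id ℝ (EuclideanSpace ℝ (Fin n)))
    (x : EuclideanSpace ℝ (Fin n))
    (zc : EuclideanSpace ℝ (Fin m)) (hzc : zc - b ∈ Set.range A) :
    (∀ z : EuclideanSpace ℝ (Fin m), z - b ∈ Set.range A →
        (α : EReal) * g zc + (((1 : ℝ) / 2 * ‖zc - (A x + b)‖ ^ 2 : ℝ) : EReal) ≤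
          (α : EReal) * g z + (((1 : ℝ) / 2 * ‖z - (A x + b)‖ ^ 2 : ℝ) : EReal)) ↔
      (∀ z : EuclideanSpace ℝ (Fin m), z - b ∈ Set.range A →
        g zc + (((1 : ℝ) / 2 *
            ‖α⁻¹ • (ContinuousLinearMap.adjoint A) (zc - b) - x‖ ^ 2 : ℝ) : EReal) ≤
          g z + (((1 : ℝ) / 2 *
            ‖α⁻¹ • (ContinuousLinearMap.adjoint A) (z - b) - x‖ ^ 2 : ℝ) : EReal)) :=
  statement11_general n m g b A α hα hA x zc hzc
end
end
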